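/- arXiv:2302.08732 — 4 statements merged into one kernel-verified Lean document; each statement's English description precedes it below -/
import Mathlib

section
/- Let s1 < s2 be real numbers, let f be a C^1 real-valued function on [s1,s2], and let g be a C^1 nonnegative increasing function on [s1,s2] with g(s2) > 0 and g'(s) > 0 for all s. Then there is an absolute constant C (independent of f, g, s1, s2) such that |f(s2)|^2 g(s2)^{-1} + g(s2)^{-2} ∫_{s1}^{s2} |f(s)|^2 g'(s) ds ≤ C ( |f(s1)|^2 g(s2)^{-1} + ∫_{s1}^{s2} |f'(s)|^2 g'(s)^{-1} ds ). -/
open Set intervalIntegral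
open MeasureTheory (volume)

/-!
By the fundamental theorem of calculus and the weighted Cauchy–Schwarz inequality,
`(f s - f s₁)² ≤ (∫ f'² / g') (∫ g') ≤ g(s₂) ∫ f'² / g'` for every `s ∈ [s₁, s₂]`, where
`∫ g' = g s₂ - g s₁ ≤ g s₂` because `g ≥ 0`. Hence `f² ≤ M := 2 f(s₁)² + 2 g(s₂) ∫ f'² / g'`
on the whole interval, so both `f(s₂)² / g(s₂)` and `g(s₂)⁻² ∫ f² g' ≤ g(s₂)⁻² M ∫ g'` are at
most `M / g(s₂)`, which gives `C = 4`.
-/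

section
variable {a b : ℝ}

theorem sq_integral_le_integral_sq_div_mul_integral {u w : ℝ → ℝ} (hab : a ≤ b)
    (hu : ContinuousOn u (Icc a b)) (hw : ContinuousOn w (Icc a b))
    (hw_pos : ∀ x ∈ Icc a b, 0 < w x) :
    (∫ x in a..b, u x) ^ 2 ≤ (∫ x in a..b, u x ^ 2 / w x) * ∫ x in a..b, w x := by
  have hint {v : ℝ → ℝ} (hv : ContinuousOn v (Icc a b)) : IntervalIntegrable v volume a b :=
    (uIcc_of_le hab ▸ hv).intervalIntegrable
  have hquad (t : ℝ) : 0 ≤ (∫ x in a..b, w x) * (t * t) + (-2 * ∫ x in a..b, u x) * t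
      + ∫ x in a..b, u x ^ 2 / w x := by
    have hexpand : ∫ x in a..b, (u x - t * w x) ^ 2 / w x
        = ∫ x in a..b, (u x ^ 2 / w x + (-2 * t) * u x + (t * t) * w x) := by
      refine integral_congr fun x hx => ?_
      have := (hw_pos x (uIcc_of_le hab ▸ hx)).ne'
      field_simp
      ring
    have hnonneg : 0 ≤ ∫ x in a..b, (u x - t * w x) ^ 2 / w x :=
      integral_nonneg hab fun x hx => div_nonneg (sq_nonneg _) (hw_pos x hx).le
    have hu2w : IntervalIntegrable (fun x => u x ^ 2 / w x) volume a b :=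
      hint ((hu.pow 2).div hw fun x hx => (hw_pos x hx).ne')
    have hu' : IntervalIntegrable (fun x => -2 * t * u x) volume a b :=
      hint (continuousOn_const.mul hu)
    have hw' : IntervalIntegrable (fun x => t * t * w x) volume a b :=
      hint (continuousOn_const.mul hw)
    rw [hexpand, integral_add (hu2w.add hu') hw', integral_add hu2w hu', integral_const_mul,
      integral_const_mul] at hnonneg
    linarith
  -- `t ↦ ∫ (u - t w)² / w` is a nonnegative quadratic, so its discriminant is nonpositive.
  have := discrim_le_zero hquad
  rw [discrim] at this
  nlinarith

theorem ContDiffOn.integral_derivWithin_eq_sub {f : ℝ → ℝ} (hab : a < b)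
    (hf : ContDiffOn ℝ 1 f (Icc a b)) {x : ℝ} (hx : x ∈ Icc a b) :
    ∫ y in a..x, derivWithin f (Icc a b) y = f x - f a := by
  have hsub : Icc a x ⊆ Icc a b := Icc_subset_Icc_right hx.2
  refine integral_eq_sub_of_hasDeriv_right_of_le hx.1 (hf.continuousOn.mono hsub)
    (fun y hy => ?_) ?_
  · have hy' : y ∈ Ioo a b := ⟨hy.1, hy.2.trans_le hx.2⟩
    exact ((hf.differentiableOn one_ne_zero y (Ioo_subset_Icc_self hy')).hasDerivWithinAt
      |>.hasDerivAt (Icc_mem_nhds hy'.1 hy'.2)).hasDerivWithinAt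
  · exact (uIcc_of_le hx.1 ▸ (hf.continuousOn_derivWithin (uniqueDiffOn_Icc hab) le_rfl).mono
      hsub).intervalIntegrable

theorem ContDiffOn.continuousOn_deriv_of_differentiableAt {g : ℝ → ℝ} (hab : a < b)
    (hg : ContDiffOn ℝ 1 g (Icc a b)) (hdiff : ∀ x ∈ Icc a b, DifferentiableAt ℝ g x) :
    ContinuousOn (deriv g) (Icc a b) :=
  (hg.continuousOn_derivWithin (uniqueDiffOn_Icc hab) le_rfl).congr fun x hx =>
    ((hdiff x hx).derivWithin (uniqueDiffOn_Icc hab x hx)).symm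

theorem sq_sub_le_integral_sq_derivWithin_div_mul_integral {f w : ℝ → ℝ} (hab : a < b)
    (hf : ContDiffOn ℝ 1 f (Icc a b)) (hw : ContinuousOn w (Icc a b))
    (hw_pos : ∀ x ∈ Icc a b, 0 < w x) {x : ℝ} (hx : x ∈ Icc a b) :
    (f x - f a) ^ 2
      ≤ (∫ y in a..b, derivWithin f (Icc a b) y ^ 2 / w y) * ∫ y in a..b, w y := by
  set F := derivWithin f (Icc a b)
  have hF : ContinuousOn F (Icc a b) :=
    hf.continuousOn_derivWithin (uniqueDiffOn_Icc hab) le_rfl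
  have hFw : ContinuousOn (fun y => F y ^ 2 / w y) (Icc a b) :=
    (hF.pow 2).div hw fun y hy => (hw_pos y hy).ne'
  have hsub : Icc a x ⊆ Icc a b := Icc_subset_Icc_right hx.2
  have hmono {v : ℝ → ℝ} (hv : ContinuousOn v (Icc a b)) (hv0 : ∀ y ∈ Icc a b, 0 ≤ v y) :
      ∫ y in a..x, v y ≤ ∫ y in a..b, v y :=
    integral_mono_interval le_rfl hx.1 hx.2
      (MeasureTheory.ae_restrict_of_forall_mem measurableSet_Ioc fun y hy =>
        hv0 y (Ioc_subset_Icc_self hy))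
      (uIcc_of_le hab.le ▸ hv).intervalIntegrable
  calc (f x - f a) ^ 2 = (∫ y in a..x, F y) ^ 2 := by rw [hf.integral_derivWithin_eq_sub hab hx]
    _ ≤ (∫ y in a..x, F y ^ 2 / w y) * ∫ y in a..x, w y :=
      sq_integral_le_integral_sq_div_mul_integral hx.1 (hF.mono hsub) (hw.mono hsub)
        fun y hy => hw_pos y (hsub hy)
    _ ≤ _ := mul_le_mul (hmono hFw fun y hy => div_nonneg (sq_nonneg _) (hw_pos y hy).le)
      (hmono hw fun y hy => (hw_pos y hy).le)
      (integral_nonneg hx.1 fun y hy => (hw_pos y (hsub hy)).le)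
      (integral_nonneg hab.le fun y hy => div_nonneg (sq_nonneg _) (hw_pos y hy).le)

theorem integral_mul_le_mul_integral_of_le {h w : ℝ → ℝ} {M : ℝ} (hab : a ≤ b)
    (hh : ContinuousOn h (Icc a b)) (hw : ContinuousOn w (Icc a b))
    (hw_nonneg : ∀ x ∈ Icc a b, 0 ≤ w x) (hle : ∀ x ∈ Icc a b, h x ≤ M) :
    ∫ x in a..b, h x * w x ≤ M * ∫ x in a..b, w x := by
  rw [← integral_const_mul]
  exact integral_mono_on hab ((uIcc_of_le hab ▸ hh.mul hw).intervalIntegrable)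
    ((uIcc_of_le hab ▸ continuousOn_const.mul hw).intervalIntegrable)
    fun x hx => mul_le_mul_of_nonneg_right (hle x hx) (hw_nonneg x hx)

end

/-- Boundary-energy inequality (key_Eob1_2): there is an absolute constant `C` such that
for all `s1 < s2`, all `C¹` functions `f` and all nonnegative increasing `C¹` functions `g`
on `[s1,s2]` with `g s2 > 0` and `g' > 0`,
`|f s2|² g(s2)⁻¹ + g(s2)⁻² ∫ f² g' ≤ C (|f s1|² g(s2)⁻¹ + ∫ (f')² (g')⁻¹)`. -/
theorem boundary_energy_ineq_2 :
    ∃ C : ℝ, 0 < C ∧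
      ∀ (s1 s2 : ℝ) (f g : ℝ → ℝ), s1 < s2 →
        ContDiffOn ℝ 1 f (Icc s1 s2) →
        ContDiffOn ℝ 1 g (Icc s1 s2) →
        (∀ s ∈ Icc s1 s2, 0 ≤ g s) →
        MonotoneOn g (Icc s1 s2) →
        0 < g s2 →
        (∀ s ∈ Icc s1 s2, 0 < deriv g s) →
        (f s2)^2 * (g s2)⁻¹
            + (g s2)⁻¹^2 * ∫ s in s1..s2, (f s)^2 * deriv g s
          ≤ C * ((f s1)^2 * (g s2)⁻¹
            + ∫ s in s1..s2, (deriv f s)^2 * (deriv g s)⁻¹) := by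
  refine ⟨4, by norm_num, fun s1 s2 f g hlt hf hg hg_nonneg _ hgs2 hg' => ?_⟩
  have hg_diff (s) (hs : s ∈ Icc s1 s2) : DifferentiableAt ℝ g s :=
    differentiableAt_of_deriv_ne_zero (hg' s hs).ne'
  have hg'_cont := hg.continuousOn_deriv_of_differentiableAt hlt hg_diff
  have hW_le : ∫ s in s1..s2, deriv g s ≤ g s2 := by
    rw [integral_deriv_eq_sub' g rfl (uIcc_of_le hlt.le ▸ hg_diff)
      (uIcc_of_le hlt.le ▸ hg'_cont)]
    linarith [hg_nonneg s1 (left_mem_Icc.2 hlt.le)]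
  set I := ∫ s in s1..s2, derivWithin f (Icc s1 s2) s ^ 2 / deriv g s
  have hI : ∫ s in s1..s2, deriv f s ^ 2 * (deriv g s)⁻¹ = I :=
    integral_congr_Ioo_of_le hlt.le fun s hs => by
      rw [derivWithin_of_mem_nhds (Icc_mem_nhds hs.1 hs.2), div_eq_mul_inv]
  have hI_nonneg : 0 ≤ I :=
    integral_nonneg hlt.le fun s hs => div_nonneg (sq_nonneg _) (hg' s hs).le
  set M := 2 * f s1 ^ 2 + 2 * (g s2 * I)
  have hM (s) (hs : s ∈ Icc s1 s2) : f s ^ 2 ≤ M := by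
    have := sq_sub_le_integral_sq_derivWithin_div_mul_integral hlt hf hg'_cont hg' hs
    nlinarith [sq_nonneg (f s - 2 * f s1), mul_le_mul_of_nonneg_left hW_le hI_nonneg]
  have hint : ∫ s in s1..s2, f s ^ 2 * deriv g s ≤ M * g s2 :=
    (integral_mul_le_mul_integral_of_le hlt.le (hf.continuousOn.pow 2) hg'_cont
      (fun s hs => (hg' s hs).le) hM).trans
      (mul_le_mul_of_nonneg_left hW_le (by positivity))
  rw [hI]
  calc _ ≤ M * (g s2)⁻¹ + (g s2)⁻¹ ^ 2 * (M * g s2) := by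
        gcongr
        exact hM s2 (right_mem_Icc.2 hlt.le)
    _ = 4 * (f s1 ^ 2 * (g s2)⁻¹ + I) := by
        field_simp
        ring
end

section
/- Let s1 < s2 be real numbers, let f be a C^1 real-valued function on [s1,s2], and let g be a C^1 positive increasing function on [s1,s2] with g'(s) > 0 for all s. Then there is an absolute constant C such that |f(s2)|^2 g(s2)^{-1} + ∫_{s1}^{s2} |f(s)|^2 g(s)^{-2} g'(s) ds ≤ C ( |f(s1)|^2 g(s1)^{-1} + ∫_{s1}^{s2} |f'(s)|^2 g'(s)^{-1} ds ). -/
/-!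
With `E = f² / g` one has `E' = 2 f f' / g - f² g' / g²`, so integrating over `[a, b]` gives
`E b + ∫ f² g' / g² = E a + ∫ 2 f f' / g`. Writing `2 f f' / g = 2 (f / g) f'` and using
`2 u v ≤ u² g' / 2 + 2 v² / g'`, the right-hand integral is bounded by half of the left-hand
one plus `2 ∫ f'² / g'`, and that half is absorbed into the left-hand side.
-/

open Set intervalIntegral
open MeasureTheory (volume)

theorem two_mul_mul_le_half_sq_mul_add {u v q : ℝ} (hq : 0 < q) :
    2 * u * v ≤ 1 / 2 * (u ^ 2 * q) + 2 * (v ^ 2 * q⁻¹) := by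
  have key : 1 / 2 * (u ^ 2 * q) + 2 * (v ^ 2 * q⁻¹) - 2 * u * v
      = (u * q - 2 * v) ^ 2 / (2 * q) := by
    field_simp
    ring
  rw [← sub_nonneg, key]
  positivity

section EnergyInequality

variable {f f' g g' : ℝ → ℝ} {a b : ℝ}

theorem hasDerivAt_sq_mul_inv {x d e : ℝ} (hf : HasDerivAt f d x) (hg : HasDerivAt g e x)
    (hgx : g x ≠ 0) :
    HasDerivAt (fun t ↦ f t ^ 2 * (g t)⁻¹)
      (2 * f x * d * (g x)⁻¹ - f x ^ 2 * (g x)⁻¹ ^ 2 * e) x := by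
  refine ((hf.pow 2).mul (hg.inv hgx)).congr_deriv ?_
  simp only [Pi.pow_apply, Pi.inv_apply]
  field_simp
  ring

theorem integral_two_mul_mul_inv_sub_eq (hab : a ≤ b) (hf : ContinuousOn f (Icc a b))
    (hg : ContinuousOn g (Icc a b)) (hg0 : ∀ x ∈ Icc a b, g x ≠ 0)
    (hfd : ∀ x ∈ Ioo a b, HasDerivAt f (f' x) x) (hgd : ∀ x ∈ Ioo a b, HasDerivAt g (g' x) x)
    (hint : IntervalIntegrable
      (fun x ↦ 2 * f x * f' x * (g x)⁻¹ - f x ^ 2 * (g x)⁻¹ ^ 2 * g' x) volume a b) :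
    ∫ x in a..b, (2 * f x * f' x * (g x)⁻¹ - f x ^ 2 * (g x)⁻¹ ^ 2 * g' x)
      = f b ^ 2 * (g b)⁻¹ - f a ^ 2 * (g a)⁻¹ :=
  integral_eq_sub_of_hasDerivAt_of_le hab ((hf.pow 2).mul (hg.inv₀ hg0))
    (fun x hx ↦ hasDerivAt_sq_mul_inv (hfd x hx) (hgd x hx) (hg0 x (Ioo_subset_Icc_self hx)))
    hint

theorem sq_mul_inv_add_integral_le (hab : a ≤ b) (hf : ContinuousOn f (Icc a b))
    (hg : ContinuousOn g (Icc a b)) (hf' : ContinuousOn f' (Icc a b))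
    (hg' : ContinuousOn g' (Icc a b)) (hg0 : ∀ x ∈ Icc a b, 0 < g x)
    (hg'0 : ∀ x ∈ Icc a b, 0 < g' x)
    (hfd : ∀ x ∈ Ioo a b, HasDerivAt f (f' x) x) (hgd : ∀ x ∈ Ioo a b, HasDerivAt g (g' x) x) :
    f b ^ 2 * (g b)⁻¹ + ∫ x in a..b, f x ^ 2 * (g x)⁻¹ ^ 2 * g' x
      ≤ 4 * (f a ^ 2 * (g a)⁻¹ + ∫ x in a..b, f' x ^ 2 * (g' x)⁻¹) := by
  have hg0' : ∀ x ∈ Icc a b, g x ≠ 0 := fun x hx ↦ (hg0 x hx).ne'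
  have hA : IntervalIntegrable (fun x ↦ 2 * f x * f' x * (g x)⁻¹) volume a b :=
    (((continuousOn_const.mul hf).mul hf').mul (hg.inv₀ hg0')).intervalIntegrable_of_Icc hab
  have hB : IntervalIntegrable (fun x ↦ f x ^ 2 * (g x)⁻¹ ^ 2 * g' x) volume a b :=
    (((hf.pow 2).mul ((hg.inv₀ hg0').pow 2)).mul hg').intervalIntegrable_of_Icc hab
  have hD : IntervalIntegrable (fun x ↦ f' x ^ 2 * (g' x)⁻¹) volume a b :=
    ((hf'.pow 2).mul (hg'.inv₀ fun x hx ↦ (hg'0 x hx).ne')).intervalIntegrable_of_Icc hab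
  have identity := integral_two_mul_mul_inv_sub_eq hab hf hg hg0' hfd hgd (hA.sub hB)
  rw [integral_sub hA hB] at identity
  have absorb : ∫ x in a..b, 2 * f x * f' x * (g x)⁻¹
      ≤ 1 / 2 * (∫ x in a..b, f x ^ 2 * (g x)⁻¹ ^ 2 * g' x)
        + 2 * ∫ x in a..b, f' x ^ 2 * (g' x)⁻¹ := by
    calc ∫ x in a..b, 2 * f x * f' x * (g x)⁻¹
        ≤ ∫ x in a..b, (1 / 2 * (f x ^ 2 * (g x)⁻¹ ^ 2 * g' x) + 2 * (f' x ^ 2 * (g' x)⁻¹)) :=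
          integral_mono_on hab hA ((hB.const_mul _).add (hD.const_mul _)) fun x hx ↦ by
            convert two_mul_mul_le_half_sq_mul_add (u := f x * (g x)⁻¹) (v := f' x) (hg'0 x hx)
              using 1 <;> ring
      _ = _ := by
        rw [integral_add (hB.const_mul _) (hD.const_mul _), integral_const_mul,
          integral_const_mul]
  have hEa : 0 ≤ f a ^ 2 * (g a)⁻¹ := by
    have := hg0 a (left_mem_Icc.mpr hab); positivity
  have hEb : 0 ≤ f b ^ 2 * (g b)⁻¹ := by
    have := hg0 b (right_mem_Icc.mpr hab); positivity
  linarith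

end EnergyInequality

theorem ContDiffOn.hasDerivAt_derivWithin_Icc {f : ℝ → ℝ} {a b x : ℝ}
    (hf : ContDiffOn ℝ 1 f (Icc a b)) (hx : x ∈ Ioo a b) :
    HasDerivAt f (derivWithin f (Icc a b) x) x := by
  have hnhds : Icc a b ∈ nhds x := Icc_mem_nhds hx.1 hx.2
  rw [derivWithin_of_mem_nhds hnhds]
  exact ((hf.differentiableOn one_ne_zero x (Ioo_subset_Icc_self hx)).differentiableAt
    hnhds).hasDerivAt

/-- Boundary-energy inequality (key_Eob1_1): there is an absolute constant `C` such that
for all `s1 < s2`, all `C¹` functions `f` and all positive increasing `C¹` functions `g`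
on `[s1,s2]` with `g' > 0`,
`|f s2|² g(s2)⁻¹ + ∫ f² g⁻² g' ≤ C (|f s1|² g(s1)⁻¹ + ∫ (f')² (g')⁻¹)`. -/
theorem boundary_energy_ineq_1 :
    ∃ C : ℝ, 0 < C ∧
      ∀ (s1 s2 : ℝ) (f g : ℝ → ℝ), s1 < s2 →
        ContDiffOn ℝ 1 f (Icc s1 s2) →
        ContDiffOn ℝ 1 g (Icc s1 s2) →
        (∀ s ∈ Icc s1 s2, 0 < g s) →
        MonotoneOn g (Icc s1 s2) →
        (∀ s ∈ Icc s1 s2, 0 < deriv g s) →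
        (f s2)^2 * (g s2)⁻¹
            + ∫ s in s1..s2, (f s)^2 * (g s)⁻¹^2 * deriv g s
          ≤ C * ((f s1)^2 * (g s1)⁻¹
            + ∫ s in s1..s2, (deriv f s)^2 * (deriv g s)⁻¹) := by
  refine ⟨4, by norm_num, fun s1 s2 f g hlt hf hg hg0 _ hg'0 ↦ ?_⟩
  have hIcc : UniqueDiffOn ℝ (Icc s1 s2) := uniqueDiffOn_Icc hlt
  -- `deriv g > 0` forces differentiability of `g` even at the endpoints.
  have hg' : ContinuousOn (deriv g) (Icc s1 s2) :=
    (hg.continuousOn_derivWithin hIcc le_rfl).congr fun x hx ↦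
      ((differentiableAt_of_deriv_ne_zero (hg'0 x hx).ne').derivWithin (hIcc x hx)).symm
  have hintegrand : EqOn (fun s ↦ derivWithin f (Icc s1 s2) s ^ 2 * (deriv g s)⁻¹)
      (fun s ↦ deriv f s ^ 2 * (deriv g s)⁻¹) (Ioo s1 s2) := fun x hx ↦ by
    dsimp only
    rw [derivWithin_of_mem_nhds (Icc_mem_nhds hx.1 hx.2)]
  rw [← integral_congr_Ioo_of_le hlt.le hintegrand]
  refine sq_mul_inv_add_integral_le hlt.le hf.continuousOn hg.continuousOn
    (hf.continuousOn_derivWithin hIcc le_rfl) hg' hg0 hg'0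
    (fun x hx ↦ hf.hasDerivAt_derivWithin_Icc hx) fun x hx ↦ ?_
  simpa only [derivWithin_of_mem_nhds (Icc_mem_nhds hx.1 hx.2)] using
    hg.hasDerivAt_derivWithin_Icc hx
end

section
/- Let m > 0 and s2 > 0, and let f be a C^1 function on (0, s2] such that the integral ∫_0^{s2} s^{-m-1} ( |f(s)|^2 + |s f'(s)|^2 ) ds is finite. Then sup_{s ∈ (0, s2]} s^{-m} |f(s)|^2 ≤ C m^{-1} ∫_0^{s2} s^{-m-1} ( |f(s)|^2 + |s f'(s)|^2 ) ds for an absolute constant C. -/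
open Set MeasureTheory Real

/-!
Write `G(t) = t^{-m} f(t)^2`. Then `G' = t^{-m-1} (-m f² + 2 f · t f')`, and completing the square,
`-m a² + 2ab ≤ b²/m`, bounds `G'` by `m⁻¹` times the energy density, so `G s - G ε` is at most
`m⁻¹` times the energy for all `0 < ε < s`. Since `G(t)/t` is dominated by the integrable energy
density while `1/t` is not integrable at `0`, `G` takes arbitrarily small values near `0`, and
letting `ε → 0` gives the bound with `C = 1`.
-/

noncomputable def energyDensity (m : ℝ) (f : ℝ → ℝ) (t : ℝ) : ℝ :=
  t ^ (-m - 1) * (f t ^ 2 + (t * deriv f t) ^ 2)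

lemma neg_mul_sq_add_two_mul_le {m : ℝ} (hm : 0 < m) (a b : ℝ) :
    -m * a ^ 2 + 2 * a * b ≤ m⁻¹ * (a ^ 2 + b ^ 2) := by
  have hsq : 0 ≤ m⁻¹ * (m * a - b) ^ 2 := by positivity
  have hexp : m⁻¹ * (m * a - b) ^ 2 = m * a ^ 2 - 2 * a * b + m⁻¹ * b ^ 2 := by
    field_simp
    ring
  linarith [mul_nonneg (inv_nonneg.2 hm.le) (sq_nonneg a)]

lemma hasDerivAt_rpow_neg_mul_sq {m t f' : ℝ} {f : ℝ → ℝ} (ht : 0 < t)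
    (hf : HasDerivAt f f' t) :
    HasDerivAt (fun x => x ^ (-m) * f x ^ 2)
      (t ^ (-m - 1) * (-m * f t ^ 2 + 2 * f t * (t * f'))) t := by
  refine ((hasDerivAt_rpow_const (p := -m) (Or.inl ht.ne')).mul (hf.pow 2)).congr_deriv ?_
  rw [rpow_sub_one ht.ne', Pi.pow_apply]
  field_simp
  ring

lemma rpow_neg_mul_sq_div_le_energyDensity {m t : ℝ} (f : ℝ → ℝ) (ht : 0 < t) :
    t ^ (-m) * f t ^ 2 / t ≤ energyDensity m f t := by
  rw [energyDensity, rpow_sub_one ht.ne', div_mul_eq_mul_div, mul_div_right_comm,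
    mul_div_right_comm]
  exact mul_le_mul_of_nonneg_left (le_add_of_nonneg_right (sq_nonneg _))
    (div_nonneg (rpow_nonneg ht.le _) ht.le)

lemma rpow_neg_mul_sq_sub_le_integral {m ε s : ℝ} {f : ℝ → ℝ} (hm : 0 < m) (hε : 0 < ε)
    (hεs : ε ≤ s) (hf : DifferentiableOn ℝ f (Icc ε s))
    (hE : IntegrableOn (energyDensity m f) (Icc ε s)) :
    s ^ (-m) * f s ^ 2 - ε ^ (-m) * f ε ^ 2 ≤ m⁻¹ * ∫ t in ε..s, energyDensity m f t := by
  rw [← intervalIntegral.integral_const_mul]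
  refine intervalIntegral.sub_le_integral_of_hasDeriv_right_of_le hεs ?_
    (fun t ht => (hasDerivAt_rpow_neg_mul_sq (hε.trans ht.1)
      ((hf.differentiableAt (Icc_mem_nhds ht.1 ht.2)).hasDerivAt)).hasDerivWithinAt)
    (hE.const_mul _) (fun t ht => ?_)
  · exact ((continuousOn_id.rpow_const fun t ht => Or.inl (hε.trans_le ht.1).ne').mul
      (hf.continuousOn.pow 2))
  · exact mul_le_mul_of_nonneg_left (neg_mul_sq_add_two_mul_le hm _ _)
      (rpow_nonneg (hε.trans ht.1).le _) |>.trans_eq (by rw [energyDensity]; ring)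

lemma exists_lt_of_div_le_integrableOn {g φ : ℝ → ℝ} {s δ : ℝ} (hs : 0 < s) (hδ : 0 < δ)
    (hφ : IntegrableOn φ (Ioo 0 s)) (hgφ : ∀ t ∈ Ioo 0 s, g t / t ≤ φ t) :
    ∃ t ∈ Ioo 0 s, g t < δ := by
  by_contra! hg
  have hinv : IntegrableOn (fun t : ℝ => t⁻¹) (Ioo 0 s) := by
    refine (hφ.const_mul δ⁻¹).mono' measurable_inv.aestronglyMeasurable ?_
    filter_upwards [ae_restrict_mem measurableSet_Ioo] with t ht
    rw [norm_inv, Real.norm_of_nonneg ht.1.le]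
    calc t⁻¹ = δ⁻¹ * (δ / t) := by field_simp
      _ ≤ δ⁻¹ * φ t := by
        gcongr
        exact (div_le_div_of_nonneg_right (hg t ht) ht.1.le).trans (hgφ t ht)
  rw [← intervalIntegrable_iff_integrableOn_Ioo_of_le hs.le, intervalIntegrable_inv_iff] at hinv
  simp [hs.ne, hs.le] at hinv

theorem rpow_neg_mul_sq_le_integral_energyDensity {m s2 s : ℝ} {f : ℝ → ℝ} (hm : 0 < m)
    (hf : DifferentiableOn ℝ f (Ioc 0 s2)) (hE : IntegrableOn (energyDensity m f) (Ioc 0 s2))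
    (hs : s ∈ Ioc 0 s2) :
    s ^ (-m) * f s ^ 2 ≤ m⁻¹ * ∫ t in Ioc 0 s2, energyDensity m f t := by
  have hE_nonneg : ∀ t ∈ Ioc 0 s2, 0 ≤ energyDensity m f t := fun t ht =>
    mul_nonneg (rpow_nonneg ht.1.le _) (by positivity)
  refine le_of_forall_pos_le_add fun δ hδ => ?_
  obtain ⟨ε, hε, hεδ⟩ := exists_lt_of_div_le_integrableOn hs.1 hδ
    (hE.mono_set fun t ht => ⟨ht.1, ht.2.le.trans hs.2⟩)
    (fun t ht => rpow_neg_mul_sq_div_le_energyDensity f ht.1)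
  have hεs : Icc ε s ⊆ Ioc 0 s2 := fun t ht => ⟨hε.1.trans_le ht.1, ht.2.trans hs.2⟩
  have hstep := rpow_neg_mul_sq_sub_le_integral hm hε.1 hε.2.le (hf.mono hεs) (hE.mono_set hεs)
  have htail : ∫ t in ε..s, energyDensity m f t ≤ ∫ t in Ioc 0 s2, energyDensity m f t := by
    rw [intervalIntegral.integral_of_le hε.2.le]
    exact setIntegral_mono_set hE ((ae_restrict_iff' measurableSet_Ioc).2
      (.of_forall hE_nonneg)) (Ioc_subset_Ioc hε.1.le hs.2).eventuallyLE
  linarith [mul_le_mul_of_nonneg_left htail (inv_nonneg.2 hm.le)]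

/-- Weighted pointwise bound near the origin (key_Eob3_2): there is an absolute constant `C`
such that for every `m > 0`, `s2 > 0` and every `C¹` function `f` on `(0, s2]` with
`∫_0^{s2} s^{-m-1} (|f|² + |s f'|²) ds < ∞`, one has
`s^{-m} |f s|² ≤ C m⁻¹ ∫_0^{s2} s^{-m-1} (|f|² + |s f'|²) ds` for all `s ∈ (0,s2]`. -/
theorem weighted_bound_origin :
    ∃ C : ℝ, 0 < C ∧
      ∀ (m s2 : ℝ) (f : ℝ → ℝ), 0 < m → 0 < s2 →
        ContDiffOn ℝ 1 f (Ioc 0 s2) →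
        IntegrableOn
          (fun s => s ^ (-m - 1) * ((f s) ^ 2 + (s * deriv f s) ^ 2)) (Ioc 0 s2) →
        ∀ s ∈ Ioc (0:ℝ) s2,
          s ^ (-m) * (f s) ^ 2
            ≤ C * m⁻¹ *
              ∫ t in Ioc (0:ℝ) s2, t ^ (-m - 1) * ((f t) ^ 2 + (t * deriv f t) ^ 2) := by
  refine ⟨1, one_pos, fun m s2 f hm _ hf hE s hs => ?_⟩
  rw [one_mul]
  exact rpow_neg_mul_sq_le_integral_energyDensity hm (hf.differentiableOn one_ne_zero) hE hs
end

section
/- Let m > 0 and s1 > 0, and let f be a C^1 function on [s1, ∞) such that ∫_{s1}^∞ s^{m-1} ( |f(s)|^2 + |s f'(s)|^2 ) ds is finite. Then sup_{s ∈ [s1, ∞)} s^m |f(s)|^2 ≤ C m^{-1} ∫_{s1}^∞ s^{m-1} ( |f(s)|^2 + |s f'(s)|^2 ) ds for an absolute constant C. -/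
open Set MeasureTheory Real

/-!
Put `F t = t ^ m * f t ^ 2` and let `ψ` be the weighted energy density. Completing the square,
`F' = t ^ (m - 1) (m f² + 2 f (t f')) ≥ -m⁻¹ t ^ (m - 1) (t f')² ≥ -m⁻¹ ψ`,
so `F s ≤ F b + m⁻¹ ∫_s^b ψ` for `s ≤ b`. Since `F t ≤ t ψ t` with `ψ` integrable and `1 / t` not,
`F b` is arbitrarily small for suitable large `b`. This gives the bound with `C = 1`.
-/

noncomputable def weightedEnergyDensity (m : ℝ) (f : ℝ → ℝ) (t : ℝ) : ℝ :=
  t ^ (m - 1) * (f t ^ 2 + (t * deriv f t) ^ 2)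

lemma weightedEnergyDensity_nonneg (m : ℝ) (f : ℝ → ℝ) {t : ℝ} (ht : 0 ≤ t) :
    0 ≤ weightedEnergyDensity m f t :=
  mul_nonneg (rpow_nonneg ht _) (by positivity)

lemma rpow_mul_sq_le_mul_weightedEnergyDensity (m : ℝ) (f : ℝ → ℝ) {t : ℝ} (ht : 0 < t) :
    t ^ m * f t ^ 2 ≤ t * weightedEnergyDensity m f t := by
  have hpow : t ^ m = t * t ^ (m - 1) := by rw [rpow_sub_one ht.ne']; field_simp
  have hA : 0 ≤ t ^ (m - 1) := rpow_nonneg ht.le _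
  rw [weightedEnergyDensity, hpow, mul_assoc]
  gcongr
  nlinarith [sq_nonneg (t * deriv f t)]

lemma neg_mul_le_inv_mul_mul_sq_add_sq {m A : ℝ} (hm : 0 < m) (hA : 0 ≤ A) (x y : ℝ) :
    -(A * (m * x ^ 2 + 2 * x * y)) ≤ m⁻¹ * (A * (x ^ 2 + y ^ 2)) := by
  have hsq : 0 ≤ m⁻¹ * (A * (m * x + y) ^ 2) := by positivity
  have hexpand :
      m⁻¹ * (A * (m * x + y) ^ 2) = A * (m * x ^ 2 + 2 * x * y) + m⁻¹ * (A * y ^ 2) := by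
    field_simp; ring
  have hx : 0 ≤ m⁻¹ * (A * x ^ 2) := by positivity
  linarith

lemma hasDerivAt_rpow_mul_sq {f : ℝ → ℝ} {f' m t : ℝ} (hf : HasDerivAt f f' t) (ht : t ≠ 0) :
    HasDerivAt (fun u => u ^ m * f u ^ 2)
      (t ^ (m - 1) * (m * f t ^ 2 + 2 * f t * (t * f'))) t := by
  refine ((hasDerivAt_rpow_const (p := m) (Or.inl ht)).mul (hf.fun_pow 2)).congr_deriv ?_
  rw [rpow_sub_one ht]; field_simp; ring

lemma exists_ge_le_div_of_integrableOn_Ici {g : ℝ → ℝ} {s ε : ℝ} (hg : IntegrableOn g (Ici s))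
    (hs : 0 < s) (hε : 0 < ε) : ∃ b ∈ Ici s, g b ≤ ε / b := by
  by_contra! hlt
  have hdom : IntegrableOn (fun t => ε / t) (Ici s) := by
    refine hg.integrable.mono' (measurable_const.div measurable_id).aestronglyMeasurable ?_
    filter_upwards [ae_restrict_mem measurableSet_Ici] with t ht
    have ht0 : 0 < t := hs.trans_le ht
    rw [norm_of_nonneg (div_pos hε ht0).le]
    exact (hlt t ht).le
  have hinv := hdom.integrable.const_mul ε⁻¹
  simp only [div_eq_mul_inv, ← mul_assoc, inv_mul_cancel₀ hε.ne', one_mul] at hinv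
  exact not_integrableOn_Ici_inv hinv

lemma rpow_mul_sq_le_add_inv_mul_integral {m s b : ℝ} {f : ℝ → ℝ} (hm : 0 < m) (hs : 0 < s)
    (hsb : s ≤ b) (hcont : ContinuousOn f (Icc s b)) (hdiff : DifferentiableOn ℝ f (Ioo s b))
    (hint : IntegrableOn (weightedEnergyDensity m f) (Icc s b)) :
    s ^ m * f s ^ 2 ≤ b ^ m * f b ^ 2 + m⁻¹ * ∫ t in s..b, weightedEnergyDensity m f t := by
  have hpos : ∀ t ∈ Icc s b, t ≠ 0 := fun t ht => (hs.trans_le ht.1).ne'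
  have hFcont : ContinuousOn (fun t => -(t ^ m * f t ^ 2)) (Icc s b) :=
    ((continuousOn_id.rpow_const fun t ht => Or.inl (hpos t ht)).mul (hcont.pow 2)).neg
  have hFderiv : ∀ t ∈ Ioo s b, HasDerivWithinAt (fun t => -(t ^ m * f t ^ 2))
      (-(t ^ (m - 1) * (m * f t ^ 2 + 2 * f t * (t * deriv f t)))) (Ioi t) t := fun t ht =>
    (hasDerivAt_rpow_mul_sq ((hdiff t ht).differentiableAt (Ioo_mem_nhds ht.1 ht.2)).hasDerivAt
      (hpos t (Ioo_subset_Icc_self ht))).neg.hasDerivWithinAt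
  have hbound := intervalIntegral.sub_le_integral_of_hasDeriv_right_of_le hsb hFcont hFderiv
    (hint.const_mul m⁻¹) fun t ht =>
      neg_mul_le_inv_mul_mul_sq_add_sq hm (rpow_nonneg (hs.trans ht.1).le _) _ _
  rw [intervalIntegral.integral_const_mul] at hbound
  linarith

lemma rpow_mul_sq_le_inv_mul_setIntegral_Ici {m s₁ s : ℝ} {f : ℝ → ℝ} (hm : 0 < m)
    (hs₁ : 0 < s₁) (hs : s₁ ≤ s) (hcont : ContinuousOn f (Ici s₁))
    (hdiff : DifferentiableOn ℝ f (Ioi s₁))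
    (hint : IntegrableOn (weightedEnergyDensity m f) (Ici s₁)) :
    s ^ m * f s ^ 2 ≤ m⁻¹ * ∫ t in Ici s₁, weightedEnergyDensity m f t := by
  have hs0 : 0 < s := hs₁.trans_le hs
  refine le_of_forall_pos_le_add fun ε hε => ?_
  obtain ⟨b, hsb, hb⟩ :=
    exists_ge_le_div_of_integrableOn_Ici (hint.mono_set (Ici_subset_Ici.2 hs)) hs0 hε
  have hb0 : 0 < b := hs0.trans_le hsb
  have hFb : b ^ m * f b ^ 2 ≤ ε := calc
    b ^ m * f b ^ 2 ≤ b * weightedEnergyDensity m f b :=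
      rpow_mul_sq_le_mul_weightedEnergyDensity m f hb0
    _ ≤ b * (ε / b) := by gcongr
    _ = ε := by field_simp
  have hIcc : Icc s b ⊆ Ici s₁ := fun t ht => hs.trans ht.1
  have htail :
      ∫ t in s..b, weightedEnergyDensity m f t ≤ ∫ t in Ici s₁, weightedEnergyDensity m f t := by
    rw [intervalIntegral.integral_of_le hsb]
    refine setIntegral_mono_set hint ?_ (Ioc_subset_Icc_self.trans hIcc).eventuallyLE
    filter_upwards [ae_restrict_mem measurableSet_Ici] with t ht
    exact weightedEnergyDensity_nonneg m f (hs₁.le.trans ht)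
  calc s ^ m * f s ^ 2
      ≤ b ^ m * f b ^ 2 + m⁻¹ * ∫ t in s..b, weightedEnergyDensity m f t :=
        rpow_mul_sq_le_add_inv_mul_integral hm hs0 hsb (hcont.mono hIcc)
          (hdiff.mono fun t ht => hs.trans_lt ht.1) (hint.mono_set hIcc)
    _ ≤ ε + m⁻¹ * ∫ t in Ici s₁, weightedEnergyDensity m f t := by gcongr
    _ = m⁻¹ * (∫ t in Ici s₁, weightedEnergyDensity m f t) + ε := add_comm _ _

/-- Weighted pointwise decay bound at infinity (key_Eob3_1): there is an absolute constant `C`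
such that for every `m > 0`, `s1 > 0` and every `C¹` function `f` on `[s1, ∞)` with
`∫_{s1}^∞ s^{m-1} (|f|² + |s f'|²) ds < ∞`, one has
`s^m |f s|² ≤ C m⁻¹ ∫_{s1}^∞ s^{m-1} (|f|² + |s f'|²) ds` for all `s ∈ [s1, ∞)`. -/
theorem weighted_bound_infinity :
    ∃ C : ℝ, 0 < C ∧
      ∀ (m s1 : ℝ) (f : ℝ → ℝ), 0 < m → 0 < s1 →
        ContDiffOn ℝ 1 f (Ici s1) →
        IntegrableOn
          (fun s => s ^ (m - 1) * ((f s) ^ 2 + (s * deriv f s) ^ 2)) (Ici s1) →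
        ∀ s ∈ Ici s1,
          s ^ m * (f s) ^ 2
            ≤ C * m⁻¹ *
              ∫ t in Ici s1, t ^ (m - 1) * ((f t) ^ 2 + (t * deriv f t) ^ 2) := by
  refine ⟨1, one_pos, fun m s1 f hm hs1 hf hint s hs => ?_⟩
  rw [one_mul]
  exact rpow_mul_sq_le_inv_mul_setIntegral_Ici hm hs1 hs hf.continuousOn
    ((hf.differentiableOn one_ne_zero).mono Ioi_subset_Ici_self) hint
end
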